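/- arXiv:1909.04033 — 3 statements merged into one kernel-verified Lean document; each statement's English description precedes it below -/
import Mathlib

section
/- Let T ≤ T' be reals, I := [T,T'], and let K : ℝ × ℝ → ℂ be continuous with |K(t',t)| ≤ C for all t', t ∈ I. Then for every t, t' ∈ I with t ≤ t', the series Σ_{n=1}^∞ K^{⋆n}(t',t) of iterated kernels converges absolutely, and its sum R̃(t',t) satisfies |R̃(t',t)| ≤ C·exp(C·(T' − T)). (Existence and bound for the ∗-resolvent of a bounded kernel.) -/
/-- Volterra convolution: `(F ⋆ G)(t',t) = ∫_t^{t'} F(t',τ)·G(τ,t) dτ`. -/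
noncomputable def volterraConv (F G : ℝ → ℝ → ℂ) : ℝ → ℝ → ℂ :=
  fun t' t => ∫ τ in t..t', F t' τ * G τ t

/-- Iterated kernels: `volterraIter K n = K^{⋆(n+1)}`, i.e.
`K^{⋆1} = K` and `K^{⋆(n+1)} = K ⋆ K^{⋆n}`. -/
noncomputable def volterraIter (K : ℝ → ℝ → ℂ) : ℕ → ℝ → ℝ → ℂ
  | 0 => K
  | n + 1 => volterraConv K (volterraIter K n)

/-- Joint continuity of the iterated kernels. -/
lemma volterraIter_cont (K : ℝ → ℝ → ℂ) (hKcont : Continuous fun p : ℝ × ℝ => K p.1 p.2)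
    (n : ℕ) : Continuous fun p : ℝ × ℝ => volterraIter K n p.1 p.2 := by
  induction n with
  | zero => exact hKcont
  | succ n ih =>
    have hu : Continuous (Function.uncurry fun (p : ℝ × ℝ) (τ : ℝ) =>
        K p.1 τ * volterraIter K n τ p.2) := by
      apply Continuous.mul
      · exact hKcont.comp ((continuous_fst.comp continuous_fst).prodMk continuous_snd)
      · exact ih.comp (continuous_snd.prodMk (continuous_snd.comp continuous_fst))
    have h1 := intervalIntegral.continuous_parametric_intervalIntegral_of_continuous
      (μ := MeasureTheory.volume) (a₀ := (0:ℝ)) hu continuous_fst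
    have h2 := intervalIntegral.continuous_parametric_intervalIntegral_of_continuous
      (μ := MeasureTheory.volume) (a₀ := (0:ℝ)) hu continuous_snd
    have hsub := h1.sub h2
    convert hsub using 1
    funext p
    show (∫ τ in p.2..p.1, K p.1 τ * volterraIter K n τ p.2) = _
    have hint : ∀ a b : ℝ,
        IntervalIntegrable (fun τ => K p.1 τ * volterraIter K n τ p.2)
          MeasureTheory.volume a b := by
      intro a b
      apply Continuous.intervalIntegrable
      exact hu.comp (Continuous.prodMk continuous_const continuous_id)
    rw [← intervalIntegral.integral_interval_sub_left (hint 0 p.1) (hint 0 p.2)]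
    rfl

/-- The pointwise factorial bound on iterated kernels. -/
lemma volterraIter_bound (T T' : ℝ) (C : ℝ) (hC0 : 0 ≤ C)
    (K : ℝ → ℝ → ℂ) (hKcont : Continuous fun p : ℝ × ℝ => K p.1 p.2)
    (hKbdd : ∀ t' ∈ Set.Icc T T', ∀ t ∈ Set.Icc T T', ‖K t' t‖ ≤ C) (n : ℕ) :
    ∀ t ∈ Set.Icc T T', ∀ t' ∈ Set.Icc T T', t ≤ t' →
      ‖volterraIter K n t' t‖ ≤ C ^ (n + 1) * (t' - t) ^ n / n.factorial := by
  induction n with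
  | zero =>
    intro t ht t' ht' htt
    simpa [volterraIter] using hKbdd t' ht' t ht
  | succ n ih =>
    intro t ht t' ht' htt
    show ‖∫ τ in t..t', K t' τ * volterraIter K n τ t‖ ≤ _
    have hbnd : ‖∫ τ in t..t', K t' τ * volterraIter K n τ t‖ ≤
        |∫ τ in t..t', C ^ (n + 2) * (τ - t) ^ n / n.factorial| := by
      apply intervalIntegral.norm_integral_le_abs_of_norm_le
      · rw [Set.uIoc_of_le htt]
        filter_upwards [MeasureTheory.ae_restrict_mem measurableSet_Ioc] with τ hτ
        have hτI : τ ∈ Set.Icc T T' := ⟨le_trans ht.1 (le_of_lt hτ.1), le_trans hτ.2 ht'.2⟩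
        have h1 : ‖K t' τ‖ ≤ C := hKbdd t' ht' τ hτI
        have h2 : ‖volterraIter K n τ t‖ ≤ C ^ (n + 1) * (τ - t) ^ n / n.factorial :=
          ih t ht τ hτI (le_of_lt hτ.1)
        calc ‖K t' τ * volterraIter K n τ t‖ = ‖K t' τ‖ * ‖volterraIter K n τ t‖ :=
              norm_mul _ _
          _ ≤ C * (C ^ (n + 1) * (τ - t) ^ n / n.factorial) := by
              apply mul_le_mul h1 h2 (norm_nonneg _) hC0
          _ = C ^ (n + 2) * (τ - t) ^ n / n.factorial := by ring
      · apply Continuous.intervalIntegrable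
        fun_prop
    have hval : (∫ τ in t..t', C ^ (n + 2) * (τ - t) ^ n / n.factorial) =
        C ^ (n + 2) * (t' - t) ^ (n + 1) / (n + 1).factorial := by
      have : (∫ τ in t..t', C ^ (n + 2) * (τ - t) ^ n / n.factorial) =
          (C ^ (n + 2) / n.factorial) * ∫ τ in t..t', (τ - t) ^ n := by
        rw [← intervalIntegral.integral_const_mul]
        congr 1; funext τ; ring
      rw [this, intervalIntegral.integral_comp_sub_right (fun x => x ^ n) t,
        sub_self, integral_pow]
      rw [zero_pow n.succ_ne_zero, sub_zero, Nat.factorial_succ]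
      have hn : (n.factorial : ℝ) ≠ 0 := Nat.cast_ne_zero.mpr n.factorial_ne_zero
      have hn1 : (n : ℝ) + 1 ≠ 0 := by positivity
      push_cast
      rw [div_mul_div_comm, div_eq_div_iff (by positivity) (by positivity)]
      ring
    rw [hval] at hbnd
    refine le_trans hbnd (le_of_eq (abs_of_nonneg ?_))
    have h1 : 0 ≤ t' - t := sub_nonneg.mpr htt
    positivity

/-- Existence and bound for the ∗-resolvent of a bounded kernel: the Neumann
series `Σ_{n≥1} K^{⋆n}(t',t)` converges absolutely for `t ≤ t'` in `I = [T,T']`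
and its sum is bounded by `C·exp(C·(T'−T))`. Here `volterraIter K n = K^{⋆(n+1)}`,
so `Σ_{n≥1} K^{⋆n} = Σ_{n≥0} volterraIter K n`. -/
theorem stmt_4 (T T' : ℝ) (hTT : T ≤ T') (C : ℝ)
    (K : ℝ → ℝ → ℂ) (hKcont : Continuous fun p : ℝ × ℝ => K p.1 p.2)
    (hKbdd : ∀ t' ∈ Set.Icc T T', ∀ t ∈ Set.Icc T T', ‖K t' t‖ ≤ C) :
    ∀ t ∈ Set.Icc T T', ∀ t' ∈ Set.Icc T T', t ≤ t' →
      Summable (fun n : ℕ => ‖volterraIter K n t' t‖) ∧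
      ‖∑' n : ℕ, volterraIter K n t' t‖ ≤ C * Real.exp (C * (T' - T)) := by
  intro t ht t' ht' htt
  have hC0 : 0 ≤ C :=
    le_trans (norm_nonneg _) (hKbdd T ⟨le_refl T, hTT⟩ T ⟨le_refl T, hTT⟩)
  have hkey := volterraIter_bound T T' C hC0 K hKcont hKbdd
  have hle : ∀ n : ℕ, ‖volterraIter K n t' t‖ ≤ C * (C * (T' - T)) ^ n / n.factorial := by
    intro n
    refine le_trans (hkey n t ht t' ht' htt) ?_
    have h1 : (t' - t) ^ n ≤ (T' - T) ^ n := by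
      apply pow_le_pow_left₀ (sub_nonneg.mpr htt)
      have := ht.1; have := ht'.2; linarith
    calc C ^ (n + 1) * (t' - t) ^ n / n.factorial
        ≤ C ^ (n + 1) * (T' - T) ^ n / n.factorial := by
          apply div_le_div_of_nonneg_right ?_ ?_ |>.trans_eq rfl
          · exact mul_le_mul_of_nonneg_left h1 (by positivity)
          · exact Nat.cast_nonneg _
      _ = C * (C * (T' - T)) ^ n / n.factorial := by rw [mul_pow, pow_succ]; ring
  have hsummaj : Summable (fun n : ℕ => C * (C * (T' - T)) ^ n / n.factorial) := by
    have := (Real.summable_pow_div_factorial (C * (T' - T))).mul_left C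
    simpa [mul_div_assoc] using this
  have hsum : Summable (fun n : ℕ => ‖volterraIter K n t' t‖) :=
    Summable.of_nonneg_of_le (fun n => norm_nonneg _) hle hsummaj
  refine ⟨hsum, ?_⟩
  calc ‖∑' n : ℕ, volterraIter K n t' t‖ ≤ ∑' n : ℕ, ‖volterraIter K n t' t‖ :=
        norm_tsum_le_tsum_norm hsum
    _ ≤ ∑' n : ℕ, C * (C * (T' - T)) ^ n / n.factorial := hsum.tsum_le_tsum hle hsummaj
    _ = C * Real.exp (C * (T' - T)) := by
        rw [Real.exp_eq_exp_ℝ, NormedSpace.exp_eq_tsum_div, ← tsum_mul_left]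
        congr 1; funext n; ring
end

section
/- Let T ≤ T' be reals, I := [T,T'], and let K_1, K_2 : ℝ × ℝ → ℂ be continuous and bounded on I², with K := K_1 + K_2. Suppose r_1, r_2, R̃ are continuous on I² and satisfy r_i = K_i + K_i ⋆ r_i and R̃ = K + K ⋆ R̃ for t ≤ t' in I. Define ρ := r_1 + r_2 + r_1 ⋆ r_2 and T̃ := K − ρ + ρ ⋆ K. Then for all t ≤ t' in I the series Σ_{k=1}^∞ ( T̃^{⋆k}(t',t) + (T̃^{⋆k} ⋆ ρ)(t',t) ) converges absolutely and R̃(t',t) = ρ(t',t) + Σ_{k=1}^∞ ( T̃^{⋆k}(t',t) + (T̃^{⋆k} ⋆ ρ)(t',t) ). (Re-summed Neumann series representation of the resolvent of a sum of two kernels.) -/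
/-! Write `N := Σ_{k ≥ 1} T̃^{⋆k}`, which converges by the factorial bound
`‖T̃^{⋆k}(t',t)‖ ≤ C^k (t' - t)^{k-1} / (k-1)!`, and `S := ρ + N + N ⋆ ρ`. Shifting the series
gives `N ⋆ T̃ = N - T̃`, and since `K + ρ ⋆ K = T̃ + ρ`, associativity yields `S ⋆ K = S - K`:
`S` is a left resolvent of `K`. Computing `S ⋆ R` once with `R = K + K ⋆ R` and once with
`S ⋆ K = S - K` gives `K ⋆ R = S ⋆ K`, hence `R = S`.

The kernels are only continuous on the triangle `T ≤ t ≤ t' ≤ T'`; by Tietze they agree there with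
kernels continuous on the whole plane, for which continuity of `⋆` and Fubini are straightforward.
-/

open MeasureTheory Set Function intervalIntegral
open scoped Interval

universe u v

theorem ContinuousOn.exists_continuous_eqOn {X : Type u} {Y : Type v} [TopologicalSpace X]
    [NormalSpace X] [TopologicalSpace Y] [TietzeExtension.{u} Y] {s : Set X} {f : X → Y}
    (hs : IsClosed s) (hf : ContinuousOn f s) : ∃ g : X → Y, Continuous g ∧ EqOn g f s := by
  obtain ⟨g, hg⟩ := ContinuousMap.exists_restrict_eq hs ⟨s.domRestrict f, hf.domRestrict⟩
  exact ⟨g, g.continuous, fun x hx => congrArg (· ⟨x, hx⟩) hg⟩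

theorem intervalIntegral_integral_swap_triangle {E : Type*} [NormedAddCommGroup E]
    [NormedSpace ℝ E] [CompleteSpace E] {f : ℝ → ℝ → E} (hf : Continuous (uncurry f))
    {a b : ℝ} (hab : a ≤ b) :
    ∫ x in a..b, ∫ y in x..b, f x y = ∫ y in a..b, ∫ x in a..y, f x y := by
  set μ := volume.restrict (Ioc a b)
  set g : ℝ × ℝ → E := {q | q.1 ≤ q.2}.indicator (uncurry f)
  have hg : Integrable g (μ.prod μ) := by
    rw [Measure.prod_restrict, ← Measure.volume_eq_prod]
    exact ((hf.continuousOn.integrableOn_compact (isCompact_Icc.prod isCompact_Icc)).mono_set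
      (prod_mono Ioc_subset_Icc_self Ioc_subset_Icc_self)).indicator
      (measurableSet_le measurable_fst measurable_snd)
  have inner_left : ∀ x ∈ Ioc a b, ∫ y, g (x, y) ∂μ = ∫ y in x..b, f x y := by
    intro x hx
    have hset : Ici x ∩ Ioc a b = Icc x b := by
      ext y; simp only [mem_inter_iff, mem_Ici, mem_Ioc, mem_Icc]; constructor
      · rintro ⟨h1, -, h2⟩; exact ⟨h1, h2⟩
      · rintro ⟨h1, h2⟩; exact ⟨h1, hx.1.trans_le h1, h2⟩
    calc ∫ y, g (x, y) ∂μ = ∫ y, (Ici x).indicator (f x) y ∂μ := rfl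
      _ = ∫ y in Icc x b, f x y := by
        rw [MeasureTheory.integral_indicator measurableSet_Ici,
          Measure.restrict_restrict measurableSet_Ici, hset]
      _ = ∫ y in x..b, f x y := by rw [integral_Icc_eq_integral_Ioc, integral_of_le hx.2]
  have inner_right : ∀ y ∈ Ioc a b, ∫ x, g (x, y) ∂μ = ∫ x in a..y, f x y := by
    intro y hy
    have hset : Iic y ∩ Ioc a b = Ioc a y := by
      ext x; simp only [mem_inter_iff, mem_Iic, mem_Ioc]; constructor
      · rintro ⟨h1, h2, -⟩; exact ⟨h2, h1⟩
      · rintro ⟨h1, h2⟩; exact ⟨h2, h1, h2.trans hy.2⟩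
    calc ∫ x, g (x, y) ∂μ = ∫ x, (Iic y).indicator (fun x => f x y) x ∂μ := rfl
      _ = ∫ x in a..y, f x y := by
        rw [MeasureTheory.integral_indicator measurableSet_Iic,
          Measure.restrict_restrict measurableSet_Iic, hset, integral_of_le hy.1.le]
  rw [integral_of_le hab, integral_of_le hab]
  calc ∫ x in Ioc a b, ∫ y in x..b, f x y = ∫ x, ∫ y, g (x, y) ∂μ ∂μ :=
        setIntegral_congr_fun measurableSet_Ioc fun x hx => (inner_left x hx).symm
    _ = ∫ y, ∫ x, g (x, y) ∂μ ∂μ := integral_integral_swap hg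
    _ = ∫ y in Ioc a b, ∫ x in a..y, f x y :=
        setIntegral_congr_fun measurableSet_Ioc inner_right

theorem continuous_volterraConv {F G : ℝ → ℝ → ℂ} (hF : Continuous (uncurry F))
    (hG : Continuous (uncurry G)) : Continuous (uncurry (volterraConv F G)) := by
  set φ : ℝ × ℝ → ℝ → ℂ := fun p τ => F p.1 τ * G τ p.2
  have hφ : Continuous (uncurry φ) :=
    (hF.comp (by fun_prop : Continuous fun q : (ℝ × ℝ) × ℝ => (q.1.1, q.2))).mul
      (hG.comp (by fun_prop : Continuous fun q : (ℝ × ℝ) × ℝ => (q.2, q.1.2)))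
  have hint : ∀ p u v, IntervalIntegrable (φ p) volume u v := fun p u v =>
    (hφ.uncurry_left p).intervalIntegrable u v
  have : uncurry (volterraConv F G) = fun p => (∫ τ in 0..p.1, φ p τ) - ∫ τ in 0..p.2, φ p τ := by
    ext p; exact (integral_interval_sub_left (hint p 0 p.1) (hint p 0 p.2)).symm
  rw [this]
  exact (continuous_parametric_intervalIntegral_of_continuous hφ continuous_fst).sub
    (continuous_parametric_intervalIntegral_of_continuous hφ continuous_snd)

theorem volterraConv_assoc_of_continuous {F G H : ℝ → ℝ → ℂ} (hF : Continuous (uncurry F))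
    (hG : Continuous (uncurry G)) (hH : Continuous (uncurry H)) {a b : ℝ} (hba : b ≤ a) :
    volterraConv (volterraConv F G) H a b = volterraConv F (volterraConv G H) a b := by
  have hcont : Continuous (uncurry fun τ σ => F a σ * G σ τ * H τ b) :=
    ((hF.comp (by fun_prop : Continuous fun q : ℝ × ℝ => (a, q.2))).mul
      (hG.comp (by fun_prop : Continuous fun q : ℝ × ℝ => (q.2, q.1)))).mul
      (hH.comp (by fun_prop : Continuous fun q : ℝ × ℝ => (q.1, b)))
  calc volterraConv (volterraConv F G) H a b
      = ∫ τ in b..a, ∫ σ in τ..a, F a σ * G σ τ * H τ b := by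
        simp only [volterraConv, intervalIntegral.integral_mul_const]
    _ = ∫ σ in b..a, ∫ τ in b..σ, F a σ * G σ τ * H τ b :=
        intervalIntegral_integral_swap_triangle hcont hba
    _ = volterraConv F (volterraConv G H) a b := by
        simp only [volterraConv, mul_assoc, intervalIntegral.integral_const_mul]

theorem ContinuousOn.uncurry_add {F G : ℝ → ℝ → ℂ} {s : Set (ℝ × ℝ)}
    (hF : ContinuousOn (uncurry F) s) (hG : ContinuousOn (uncurry G) s) :
    ContinuousOn (uncurry (F + G)) s :=
  hF.add hG

theorem ContinuousOn.uncurry_sub {F G : ℝ → ℝ → ℂ} {s : Set (ℝ × ℝ)}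
    (hF : ContinuousOn (uncurry F) s) (hG : ContinuousOn (uncurry G) s) :
    ContinuousOn (uncurry (F - G)) s :=
  hF.sub hG

def volterraTriangle (T T' : ℝ) : Set (ℝ × ℝ) := {p | T ≤ p.2 ∧ p.2 ≤ p.1 ∧ p.1 ≤ T'}

section Triangle

variable {T T' : ℝ}

theorem isClosed_volterraTriangle : IsClosed (volterraTriangle T T') :=
  (isClosed_le continuous_const continuous_snd).inter
    ((isClosed_le continuous_snd continuous_fst).inter
      (isClosed_le continuous_fst continuous_const))

theorem volterraTriangle_subset : volterraTriangle T T' ⊆ Icc T T' ×ˢ Icc T T' :=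
  fun _ ⟨h1, h2, h3⟩ => ⟨⟨h1.trans h2, h3⟩, ⟨h1, h2.trans h3⟩⟩

theorem isCompact_volterraTriangle : IsCompact (volterraTriangle T T') :=
  (isCompact_Icc.prod isCompact_Icc).of_isClosed_subset isClosed_volterraTriangle
    volterraTriangle_subset

theorem volterraTriangle_mk_left {a b τ : ℝ} (hp : (a, b) ∈ volterraTriangle T T')
    (hτ : τ ∈ Icc b a) : (a, τ) ∈ volterraTriangle T T' :=
  ⟨hp.1.trans hτ.1, hτ.2, hp.2.2⟩

theorem volterraTriangle_mk_right {a b τ : ℝ} (hp : (a, b) ∈ volterraTriangle T T')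
    (hτ : τ ∈ Icc b a) : (τ, b) ∈ volterraTriangle T T' :=
  ⟨hp.1, hτ.1, hτ.2.trans hp.2.2⟩

theorem exists_continuous_eqOn_volterraTriangle {A : ℝ → ℝ → ℂ}
    (hA : ContinuousOn (uncurry A) (volterraTriangle T T')) :
    ∃ B : ℝ → ℝ → ℂ,
      Continuous (uncurry B) ∧ EqOn (uncurry B) (uncurry A) (volterraTriangle T T') := by
  obtain ⟨g, hg, hgA⟩ := hA.exists_continuous_eqOn isClosed_volterraTriangle
  exact ⟨curry g, by rwa [uncurry_curry], by rwa [uncurry_curry]⟩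

variable {F F' G G' H : ℝ → ℝ → ℂ}

theorem volterraConv_eqOn (hF : EqOn (uncurry F) (uncurry F') (volterraTriangle T T'))
    (hG : EqOn (uncurry G) (uncurry G') (volterraTriangle T T')) :
    EqOn (uncurry (volterraConv F G)) (uncurry (volterraConv F' G')) (volterraTriangle T T') := by
  rintro ⟨a, b⟩ hp
  refine integral_congr fun τ hτ => ?_
  rw [uIcc_of_le hp.2.1] at hτ
  exact congrArg₂ (· * ·) (hF (volterraTriangle_mk_left hp hτ))
    (hG (volterraTriangle_mk_right hp hτ))

theorem ContinuousOn.volterraConv (hF : ContinuousOn (uncurry F) (volterraTriangle T T'))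
    (hG : ContinuousOn (uncurry G) (volterraTriangle T T')) :
    ContinuousOn (uncurry (volterraConv F G)) (volterraTriangle T T') := by
  obtain ⟨F', hF', hFF'⟩ := exists_continuous_eqOn_volterraTriangle hF
  obtain ⟨G', hG', hGG'⟩ := exists_continuous_eqOn_volterraTriangle hG
  exact (continuous_volterraConv hF' hG').continuousOn.congr (volterraConv_eqOn hFF'.symm hGG'.symm)

theorem volterraConv_assoc (hF : ContinuousOn (uncurry F) (volterraTriangle T T'))
    (hG : ContinuousOn (uncurry G) (volterraTriangle T T'))
    (hH : ContinuousOn (uncurry H) (volterraTriangle T T')) {a b : ℝ}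
    (hp : (a, b) ∈ volterraTriangle T T') :
    volterraConv (volterraConv F G) H a b = volterraConv F (volterraConv G H) a b := by
  obtain ⟨F', hF', hFF'⟩ := exists_continuous_eqOn_volterraTriangle hF
  obtain ⟨G', hG', hGG'⟩ := exists_continuous_eqOn_volterraTriangle hG
  obtain ⟨H', hH', hHH'⟩ := exists_continuous_eqOn_volterraTriangle hH
  calc volterraConv (volterraConv F G) H a b = volterraConv (volterraConv F' G') H' a b :=
        volterraConv_eqOn (volterraConv_eqOn hFF'.symm hGG'.symm) hHH'.symm hp
    _ = volterraConv F' (volterraConv G' H') a b :=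
        volterraConv_assoc_of_continuous hF' hG' hH' hp.2.1
    _ = volterraConv F (volterraConv G H) a b :=
        volterraConv_eqOn hFF' (volterraConv_eqOn hGG' hHH') hp

theorem intervalIntegrable_volterraConv (hF : ContinuousOn (uncurry F) (volterraTriangle T T'))
    (hG : ContinuousOn (uncurry G) (volterraTriangle T T')) {a b : ℝ}
    (hp : (a, b) ∈ volterraTriangle T T') :
    IntervalIntegrable (fun τ => F a τ * G τ b) volume b a := by
  refine ContinuousOn.intervalIntegrable ?_
  rw [uIcc_of_le hp.2.1]
  exact (hF.comp (by fun_prop) fun τ hτ => volterraTriangle_mk_left hp hτ).mul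
    (hG.comp (by fun_prop) fun τ hτ => volterraTriangle_mk_right hp hτ)

theorem volterraConv_add_left (hF : ContinuousOn (uncurry F) (volterraTriangle T T'))
    (hF' : ContinuousOn (uncurry F') (volterraTriangle T T'))
    (hG : ContinuousOn (uncurry G) (volterraTriangle T T')) {a b : ℝ}
    (hp : (a, b) ∈ volterraTriangle T T') :
    volterraConv (F + F') G a b = volterraConv F G a b + volterraConv F' G a b := by
  simp only [volterraConv, Pi.add_apply, add_mul]
  exact integral_add (intervalIntegrable_volterraConv hF hG hp)
    (intervalIntegrable_volterraConv hF' hG hp)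

theorem volterraConv_sub_left (hF : ContinuousOn (uncurry F) (volterraTriangle T T'))
    (hF' : ContinuousOn (uncurry F') (volterraTriangle T T'))
    (hG : ContinuousOn (uncurry G) (volterraTriangle T T')) {a b : ℝ}
    (hp : (a, b) ∈ volterraTriangle T T') :
    volterraConv (F - F') G a b = volterraConv F G a b - volterraConv F' G a b := by
  simp only [volterraConv, Pi.sub_apply, sub_mul]
  exact integral_sub (intervalIntegrable_volterraConv hF hG hp)
    (intervalIntegrable_volterraConv hF' hG hp)

theorem volterraConv_add_right (hF : ContinuousOn (uncurry F) (volterraTriangle T T'))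
    (hG : ContinuousOn (uncurry G) (volterraTriangle T T'))
    (hG' : ContinuousOn (uncurry G') (volterraTriangle T T')) {a b : ℝ}
    (hp : (a, b) ∈ volterraTriangle T T') :
    volterraConv F (G + G') a b = volterraConv F G a b + volterraConv F G' a b := by
  simp only [volterraConv, Pi.add_apply, mul_add]
  exact integral_add (intervalIntegrable_volterraConv hF hG hp)
    (intervalIntegrable_volterraConv hF hG' hp)

end Triangle

noncomputable def volterraNeumann (A : ℝ → ℝ → ℂ) : ℝ → ℝ → ℂ :=
  fun a b => ∑' n, volterraIter A n a b

section Neumann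

open Nat

variable {T T' : ℝ} {A G : ℝ → ℝ → ℂ}

theorem ContinuousOn.volterraIter (hA : ContinuousOn (uncurry A) (volterraTriangle T T'))
    (n : ℕ) : ContinuousOn (uncurry (volterraIter A n)) (volterraTriangle T T') := by
  induction n with
  | zero => exact hA
  | succ n ih => exact hA.volterraConv ih

theorem volterraIter_succ' (hA : ContinuousOn (uncurry A) (volterraTriangle T T')) (n : ℕ)
    {a b : ℝ} (hp : (a, b) ∈ volterraTriangle T T') :
    volterraIter A (n + 1) a b = volterraConv (volterraIter A n) A a b := by
  induction n generalizing a b with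
  | zero => rfl
  | succ n ih =>
    calc volterraIter A (n + 2) a b = volterraConv A (volterraConv (volterraIter A n) A) a b :=
          volterraConv_eqOn (G' := volterraConv (volterraIter A n) A) (eqOn_refl _ _)
            (fun ⟨_, _⟩ hq => ih hq) hp
      _ = volterraConv (volterraIter A (n + 1)) A a b :=
          (volterraConv_assoc hA (hA.volterraIter n) hA hp).symm

theorem norm_volterraIter_le {C : ℝ}
    (hC : ∀ a b, (a, b) ∈ volterraTriangle T T' → ‖A a b‖ ≤ C) (n : ℕ) :
    ∀ a b, (a, b) ∈ volterraTriangle T T' →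
      ‖volterraIter A n a b‖ ≤ C * (C * (a - b)) ^ n / n ! := by
  induction n with
  | zero => simpa [volterraIter] using hC
  | succ n ih =>
    intro a b hp
    have hbound : ∀ τ ∈ Ioc b a,
        ‖A a τ * volterraIter A n τ b‖ ≤ C ^ (n + 2) / n ! * (τ - b) ^ n := by
      intro τ hτ
      have hA := hC a τ (volterraTriangle_mk_left hp (Ioc_subset_Icc_self hτ))
      have hAn := ih τ b (volterraTriangle_mk_right hp (Ioc_subset_Icc_self hτ))
      calc ‖A a τ * volterraIter A n τ b‖ ≤ C * (C * (C * (τ - b)) ^ n / n !) := by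
            rw [norm_mul]; exact mul_le_mul hA hAn (norm_nonneg _) ((norm_nonneg _).trans hA)
        _ = C ^ (n + 2) / n ! * (τ - b) ^ n := by rw [mul_pow]; ring
    calc ‖volterraIter A (n + 1) a b‖ ≤ ∫ τ in b..a, C ^ (n + 2) / n ! * (τ - b) ^ n :=
          norm_integral_le_of_norm_le hp.2.1 (ae_of_all _ hbound)
            (Continuous.intervalIntegrable (by fun_prop) _ _)
      _ = C * (C * (a - b)) ^ (n + 1) / (n + 1)! := by
          rw [intervalIntegral.integral_const_mul, integral_comp_sub_right (fun x => x ^ n),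
            sub_self, integral_pow, zero_pow n.succ_ne_zero, Nat.factorial_succ, mul_pow]
          push_cast
          field_simp
          ring

theorem exists_summable_bound_volterraIter
    (hA : ContinuousOn (uncurry A) (volterraTriangle T T')) :
    ∃ M : ℕ → ℝ, Summable M ∧
      ∀ n a b, (a, b) ∈ volterraTriangle T T' → ‖volterraIter A n a b‖ ≤ M n := by
  obtain ⟨C, hC⟩ := isCompact_volterraTriangle.exists_bound_of_continuousOn hA
  refine ⟨fun n => |C| * (|C| * (T' - T)) ^ n / n !, ?_, fun n a b hp => ?_⟩
  · simpa only [mul_div_assoc] using (Real.summable_pow_div_factorial _).mul_left |C|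
  · refine (norm_volterraIter_le (fun a b hp => (hC (a, b) hp).trans (le_abs_self C)) n a b
      hp).trans ?_
    have hba : 0 ≤ a - b := sub_nonneg.2 hp.2.1
    dsimp only
    gcongr
    exacts [hp.2.2, hp.1]

theorem hasSum_volterraIter (hA : ContinuousOn (uncurry A) (volterraTriangle T T')) {a b : ℝ}
    (hp : (a, b) ∈ volterraTriangle T T') :
    HasSum (fun n => volterraIter A n a b) (volterraNeumann A a b) := by
  obtain ⟨M, hM, hMb⟩ := exists_summable_bound_volterraIter hA
  exact (hM.of_norm_bounded fun n => hMb n a b hp).hasSum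

theorem ContinuousOn.volterraNeumann (hA : ContinuousOn (uncurry A) (volterraTriangle T T')) :
    ContinuousOn (uncurry (volterraNeumann A)) (volterraTriangle T T') := by
  obtain ⟨M, hM, hMb⟩ := exists_summable_bound_volterraIter hA
  exact continuousOn_tsum (fun n => hA.volterraIter n) hM fun n p hp => hMb n p.1 p.2 hp

theorem hasSum_volterraConv_volterraIter
    (hA : ContinuousOn (uncurry A) (volterraTriangle T T'))
    (hG : ContinuousOn (uncurry G) (volterraTriangle T T')) {a b : ℝ}
    (hp : (a, b) ∈ volterraTriangle T T') :
    HasSum (fun n => volterraConv (volterraIter A n) G a b)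
      (volterraConv (volterraNeumann A) G a b) := by
  obtain ⟨M, hM, hMb⟩ := exists_summable_bound_volterraIter hA
  obtain ⟨C, hC⟩ := isCompact_volterraTriangle.exists_bound_of_continuousOn hG
  refine intervalIntegral.hasSum_integral_of_dominated_convergence (fun n _ => M n * C)
    (fun n => (intervalIntegrable_volterraConv (hA.volterraIter n) hG hp).def'.aestronglyMeasurable)
    (fun n => ae_of_all _ fun τ hτ => ?_) (ae_of_all _ fun _ _ => hM.mul_right C)
    intervalIntegrable_const (ae_of_all _ fun τ hτ => ?_)
  all_goals rw [uIoc_of_le hp.2.1] at hτ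
  · have hAn := hMb n a τ (volterraTriangle_mk_left hp (Ioc_subset_Icc_self hτ))
    rw [norm_mul]
    exact mul_le_mul hAn (hC (τ, b) (volterraTriangle_mk_right hp (Ioc_subset_Icc_self hτ)))
      (norm_nonneg _) ((norm_nonneg _).trans hAn)
  · exact (hasSum_volterraIter hA
      (volterraTriangle_mk_left hp (Ioc_subset_Icc_self hτ))).mul_right _

theorem volterraConv_volterraNeumann_self
    (hA : ContinuousOn (uncurry A) (volterraTriangle T T')) {a b : ℝ}
    (hp : (a, b) ∈ volterraTriangle T T') :
    volterraConv (volterraNeumann A) A a b = volterraNeumann A a b - A a b := by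
  have hshift : HasSum (fun n => volterraIter A (n + 1) a b) (volterraNeumann A a b - A a b) := by
    simpa [volterraIter] using (hasSum_nat_add_iff' 1).mpr (hasSum_volterraIter hA hp)
  refine (hasSum_volterraConv_volterraIter hA hA hp).unique ?_
  simpa only [volterraIter_succ' hA _ hp] using hshift

theorem norm_volterraConv_le {F : ℝ → ℝ → ℂ} {a b CF CG : ℝ} (hba : b ≤ a)
    (hF : ∀ τ ∈ Ioc b a, ‖F a τ‖ ≤ CF) (hG : ∀ τ ∈ Ioc b a, ‖G τ b‖ ≤ CG) :
    ‖volterraConv F G a b‖ ≤ CF * CG * (a - b) := by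
  have hbound : ∀ τ ∈ Ι b a, ‖F a τ * G τ b‖ ≤ CF * CG := by
    intro τ hτ
    rw [uIoc_of_le hba] at hτ
    rw [norm_mul]
    exact mul_le_mul (hF τ hτ) (hG τ hτ) (norm_nonneg _) ((norm_nonneg _).trans (hF τ hτ))
  simpa [volterraConv, abs_of_nonneg (sub_nonneg.2 hba)] using
    norm_integral_le_of_norm_le_const hbound

theorem summable_norm_volterraIter_add_volterraConv
    (hA : ContinuousOn (uncurry A) (volterraTriangle T T'))
    (hG : ContinuousOn (uncurry G) (volterraTriangle T T')) {a b : ℝ}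
    (hp : (a, b) ∈ volterraTriangle T T') :
    Summable fun n => ‖volterraIter A n a b + volterraConv (volterraIter A n) G a b‖ := by
  obtain ⟨M, hM, hMb⟩ := exists_summable_bound_volterraIter hA
  obtain ⟨C, hC⟩ := isCompact_volterraTriangle.exists_bound_of_continuousOn hG
  have hIter : Summable fun n => ‖volterraIter A n a b‖ :=
    hM.of_nonneg_of_le (fun _ => norm_nonneg _) fun n => hMb n a b hp
  have hConv : Summable fun n => ‖volterraConv (volterraIter A n) G a b‖ := by
    refine (hM.mul_right (C * (a - b))).of_nonneg_of_le (fun _ => norm_nonneg _) fun n => ?_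
    refine (norm_volterraConv_le hp.2.1
      (fun τ hτ => hMb n a τ (volterraTriangle_mk_left hp (Ioc_subset_Icc_self hτ)))
      (fun τ hτ => hC (τ, b) (volterraTriangle_mk_right hp (Ioc_subset_Icc_self hτ)))).trans_eq ?_
    ring
  exact (hIter.add hConv).of_nonneg_of_le (fun _ => norm_nonneg _) fun n => norm_add_le _ _

end Neumann

section Resolvent

variable {T T' : ℝ} {K ρ N R S : ℝ → ℝ → ℂ}

theorem volterraConv_resummed_eq_sub (hK : ContinuousOn (uncurry K) (volterraTriangle T T'))
    (hρ : ContinuousOn (uncurry ρ) (volterraTriangle T T'))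
    (hN : ContinuousOn (uncurry N) (volterraTriangle T T'))
    (hNT : ∀ a b, (a, b) ∈ volterraTriangle T T' →
      volterraConv N (K - ρ + volterraConv ρ K) a b = N a b - (K - ρ + volterraConv ρ K) a b)
    {a b : ℝ} (hp : (a, b) ∈ volterraTriangle T T') :
    volterraConv (ρ + N + volterraConv N ρ) K a b = (ρ + N + volterraConv N ρ) a b - K a b := by
  have hρK := hρ.volterraConv hK
  have hsplit : volterraConv (ρ + N + volterraConv N ρ) K a b
      = volterraConv ρ K a b + (volterraConv N K a b + volterraConv N (volterraConv ρ K) a b) := by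
    rw [volterraConv_add_left (hρ.uncurry_add hN) (hN.volterraConv hρ) hK hp,
      volterraConv_add_left hρ hN hK hp, volterraConv_assoc hN hρ hK hp, add_assoc]
  have hcombine : volterraConv N K a b + volterraConv N (volterraConv ρ K) a b
      = volterraConv N (K - ρ + volterraConv ρ K) a b + volterraConv N ρ a b := by
    rw [← volterraConv_add_right hN hK hρK hp,
      ← volterraConv_add_right hN ((hK.uncurry_sub hρ).uncurry_add hρK) hρ hp,
      show K - ρ + volterraConv ρ K + ρ = K + volterraConv ρ K by abel]
  rw [hsplit, hcombine, hNT a b hp]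
  simp only [Pi.add_apply, Pi.sub_apply]
  ring

theorem volterraResolvent_right_eq_left (hK : ContinuousOn (uncurry K) (volterraTriangle T T'))
    (hR : ContinuousOn (uncurry R) (volterraTriangle T T'))
    (hS : ContinuousOn (uncurry S) (volterraTriangle T T'))
    (hRK : ∀ a b, (a, b) ∈ volterraTriangle T T' → R a b = K a b + volterraConv K R a b)
    (hSK : ∀ a b, (a, b) ∈ volterraTriangle T T' → volterraConv S K a b = S a b - K a b)
    {a b : ℝ} (hp : (a, b) ∈ volterraTriangle T T') : R a b = S a b := by
  have hSR : volterraConv S R a b = volterraConv S K a b + volterraConv S (volterraConv K R) a b :=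
    (volterraConv_eqOn (G' := K + volterraConv K R) (eqOn_refl _ _) (fun ⟨_, _⟩ hq => hRK _ _ hq)
      hp).trans (volterraConv_add_right hS hK (hK.volterraConv hR) hp)
  have hSKR : volterraConv S (volterraConv K R) a b = volterraConv S R a b - volterraConv K R a b :=
    (volterraConv_assoc hS hK hR hp).symm.trans
      ((volterraConv_eqOn (F := volterraConv S K) (F' := S - K) (fun ⟨_, _⟩ hq => hSK _ _ hq)
        (eqOn_refl _ _) hp).trans (volterraConv_sub_left hS hK hR hp))
  rw [hRK a b hp]
  linear_combination hSR + hSKR + hSK a b hp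

end Resolvent

/-- Here `volterraIter Ttil k = T̃^{⋆(k+1)}`, so the sum over `k : ℕ` below is the
sum over `k ≥ 1`. -/
theorem stmt_10_general (T T' : ℝ)
    (K₁ K₂ : ℝ → ℝ → ℂ)
    (hK1cont : ContinuousOn (fun p : ℝ × ℝ => K₁ p.1 p.2)
      (Set.Icc T T' ×ˢ Set.Icc T T'))
    (hK2cont : ContinuousOn (fun p : ℝ × ℝ => K₂ p.1 p.2)
      (Set.Icc T T' ×ˢ Set.Icc T T'))
    (K : ℝ → ℝ → ℂ) (hK : ∀ t' t, K t' t = K₁ t' t + K₂ t' t)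
    (r₁ r₂ R : ℝ → ℝ → ℂ)
    (hr1cont : ContinuousOn (fun p : ℝ × ℝ => r₁ p.1 p.2)
      (Set.Icc T T' ×ˢ Set.Icc T T'))
    (hr2cont : ContinuousOn (fun p : ℝ × ℝ => r₂ p.1 p.2)
      (Set.Icc T T' ×ˢ Set.Icc T T'))
    (hRcont : ContinuousOn (fun p : ℝ × ℝ => R p.1 p.2)
      (Set.Icc T T' ×ˢ Set.Icc T T'))
    (hRres : ∀ t ∈ Set.Icc T T', ∀ t' ∈ Set.Icc T T', t ≤ t' →
      R t' t = K t' t + volterraConv K R t' t)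
    (ρ : ℝ → ℝ → ℂ)
    (hρ : ∀ t' t, ρ t' t = r₁ t' t + r₂ t' t + volterraConv r₁ r₂ t' t)
    (Ttil : ℝ → ℝ → ℂ)
    (hTtil : ∀ t' t, Ttil t' t = K t' t - ρ t' t + volterraConv ρ K t' t) :
    ∀ t ∈ Set.Icc T T', ∀ t' ∈ Set.Icc T T', t ≤ t' →
      Summable (fun k : ℕ =>
        ‖volterraIter Ttil k t' t + volterraConv (volterraIter Ttil k) ρ t' t‖) ∧
      R t' t = ρ t' t + ∑' k : ℕ,
        (volterraIter Ttil k t' t + volterraConv (volterraIter Ttil k) ρ t' t) := by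
  intro t ht t' ht' htt
  have hp : (t', t) ∈ volterraTriangle T T' := ⟨ht.1, htt, ht'.2⟩
  obtain rfl : Ttil = K - ρ + volterraConv ρ K := funext₂ hTtil
  have hKc : ContinuousOn (uncurry K) (volterraTriangle T T') := by
    rw [show K = K₁ + K₂ from funext₂ hK]
    exact (hK1cont.mono volterraTriangle_subset).uncurry_add (hK2cont.mono volterraTriangle_subset)
  have hρc : ContinuousOn (uncurry ρ) (volterraTriangle T T') := by
    have hr1c := hr1cont.mono volterraTriangle_subset
    have hr2c := hr2cont.mono volterraTriangle_subset
    rw [show ρ = r₁ + r₂ + volterraConv r₁ r₂ from funext₂ hρ]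
    exact (hr1c.uncurry_add hr2c).uncurry_add (hr1c.volterraConv hr2c)
  have hTc := (hKc.uncurry_sub hρc).uncurry_add (hρc.volterraConv hKc)
  have hNc := hTc.volterraNeumann
  have hRS := volterraResolvent_right_eq_left hKc (hRcont.mono volterraTriangle_subset)
    ((hρc.uncurry_add hNc).uncurry_add (hNc.volterraConv hρc))
    (fun a b hq => hRres b ⟨hq.1, hq.2.1.trans hq.2.2⟩ a ⟨hq.1.trans hq.2.1, hq.2.2⟩ hq.2.1)
    (fun _ _ hq => volterraConv_resummed_eq_sub hKc hρc hNc
      (fun _ _ => volterraConv_volterraNeumann_self hTc) hq) hp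
  refine ⟨summable_norm_volterraIter_add_volterraConv hTc hρc hp, ?_⟩
  rw [hRS, ((hasSum_volterraIter hTc hp).add (hasSum_volterraConv_volterraIter hTc hρc hp)).tsum_eq]
  simp only [Pi.add_apply, add_assoc]

/-- Re-summed Neumann series representation of the resolvent of a sum of two
kernels: with `ρ = r₁ + r₂ + r₁ ⋆ r₂` and `T̃ = K − ρ + ρ ⋆ K`, the series
`Σ_{k≥1} (T̃^{⋆k}(t',t) + (T̃^{⋆k} ⋆ ρ)(t',t))` converges absolutely and
`R̃ = ρ + Σ_{k≥1} (T̃^{⋆k} + T̃^{⋆k} ⋆ ρ)` on `t ≤ t'` in `I = [T,T']`.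
Here `volterraIter Ttil k = T̃^{⋆(k+1)}`, so the sum over `k : ℕ` below is the
sum over `k ≥ 1`. -/
theorem stmt_10 (T T' : ℝ) (hTT : T ≤ T')
    (K₁ K₂ : ℝ → ℝ → ℂ)
    (hK1cont : ContinuousOn (fun p : ℝ × ℝ => K₁ p.1 p.2)
      (Set.Icc T T' ×ˢ Set.Icc T T'))
    (hK2cont : ContinuousOn (fun p : ℝ × ℝ => K₂ p.1 p.2)
      (Set.Icc T T' ×ˢ Set.Icc T T'))
    (hK1bdd : ∃ C : ℝ, ∀ t' ∈ Set.Icc T T', ∀ t ∈ Set.Icc T T', ‖K₁ t' t‖ ≤ C)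
    (hK2bdd : ∃ C : ℝ, ∀ t' ∈ Set.Icc T T', ∀ t ∈ Set.Icc T T', ‖K₂ t' t‖ ≤ C)
    (K : ℝ → ℝ → ℂ) (hK : ∀ t' t, K t' t = K₁ t' t + K₂ t' t)
    (r₁ r₂ R : ℝ → ℝ → ℂ)
    (hr1cont : ContinuousOn (fun p : ℝ × ℝ => r₁ p.1 p.2)
      (Set.Icc T T' ×ˢ Set.Icc T T'))
    (hr2cont : ContinuousOn (fun p : ℝ × ℝ => r₂ p.1 p.2)
      (Set.Icc T T' ×ˢ Set.Icc T T'))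
    (hRcont : ContinuousOn (fun p : ℝ × ℝ => R p.1 p.2)
      (Set.Icc T T' ×ˢ Set.Icc T T'))
    (hr1 : ∀ t ∈ Set.Icc T T', ∀ t' ∈ Set.Icc T T', t ≤ t' →
      r₁ t' t = K₁ t' t + volterraConv K₁ r₁ t' t)
    (hr2 : ∀ t ∈ Set.Icc T T', ∀ t' ∈ Set.Icc T T', t ≤ t' →
      r₂ t' t = K₂ t' t + volterraConv K₂ r₂ t' t)
    (hRres : ∀ t ∈ Set.Icc T T', ∀ t' ∈ Set.Icc T T', t ≤ t' →
      R t' t = K t' t + volterraConv K R t' t)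
    (ρ : ℝ → ℝ → ℂ)
    (hρ : ∀ t' t, ρ t' t = r₁ t' t + r₂ t' t + volterraConv r₁ r₂ t' t)
    (Ttil : ℝ → ℝ → ℂ)
    (hTtil : ∀ t' t, Ttil t' t = K t' t - ρ t' t + volterraConv ρ K t' t) :
    ∀ t ∈ Set.Icc T T', ∀ t' ∈ Set.Icc T T', t ≤ t' →
      Summable (fun k : ℕ =>
        ‖volterraIter Ttil k t' t + volterraConv (volterraIter Ttil k) ρ t' t‖) ∧
      R t' t = ρ t' t + ∑' k : ℕ,
        (volterraIter Ttil k t' t + volterraConv (volterraIter Ttil k) ρ t' t) :=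
  stmt_10_general T T' K₁ K₂ hK1cont hK2cont K hK r₁ r₂ R hr1cont hr2cont hRcont hRres ρ hρ Ttil
    hTtil
end

section
/- Let T ≤ T' be reals, I := [T,T'], let K : ℝ × ℝ → ℂ be continuous with |K(t',t)| ≤ C_K on I², and let g, f : ℝ × ℝ → ℂ be continuous on I² with |f(t',t)| ≤ C_f on I² and f = g + K ⋆ f on t ≤ t' in I. Then for every n ≥ 1 and all t ≤ t' in I, the truncated Neumann approximation f_N^{(n−1)} := g + Σ_{k=1}^{n−1} K^{⋆k} ⋆ g satisfies |f(t',t) − f_N^{(n−1)}(t',t)| ≤ C_f · (C_K·(T' − T))^n / n!. -/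
open MeasureTheory Set intervalIntegral

lemma triangle_swap {φ : ℝ → ℝ → ℂ} (hφ : Continuous fun p : ℝ × ℝ => φ p.1 p.2)
    {t t' : ℝ} (h : t ≤ t') :
    (∫ s in t..t', ∫ τ in s..t', φ τ s) = ∫ τ in t..t', ∫ s in t..τ, φ τ s := by
  have hmeas : MeasurableSet {p : ℝ × ℝ | p.1 < p.2} :=
    measurableSet_lt measurable_fst measurable_snd
  set ψ : ℝ × ℝ → ℂ := {p : ℝ × ℝ | p.1 < p.2}.indicator (fun p => φ p.2 p.1) with hψ
  have key : (∫ s in Ioc t t', ∫ τ in Ioc t t', ψ (s, τ)) =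
      ∫ τ in Ioc t t', ∫ s in Ioc t t', ψ (s, τ) := by
    apply integral_integral_swap
    have : Function.uncurry (fun s τ => ψ (s, τ)) = ψ := by
      funext z; simp [Function.uncurry]
    rw [this, Measure.prod_restrict, ← Measure.volume_eq_prod]
    refine IntegrableOn.indicator ?_ hmeas
    exact (((hφ.comp continuous_swap).continuousOn.integrableOn_compact
      (isCompact_Icc.prod isCompact_Icc))).mono_set
      (prod_mono Ioc_subset_Icc_self Ioc_subset_Icc_self)
  rw [integral_of_le h, integral_of_le h]
  calc (∫ s in Ioc t t', ∫ τ in s..t', φ τ s)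
      = ∫ s in Ioc t t', ∫ τ in Ioc t t', ψ (s, τ) := by
        apply setIntegral_congr_fun measurableSet_Ioc
        intro s hs
        dsimp only
        have h1 : (fun τ => ψ (s, τ)) = (Ioi s).indicator (fun τ => φ τ s) := by
          funext τ; by_cases hsτ : s < τ <;> simp [hψ, indicator, hsτ]
        rw [h1, setIntegral_indicator measurableSet_Ioi,
          show Ioc t t' ∩ Ioi s = Ioc s t' by
            ext x; simp only [mem_inter_iff, mem_Ioc, mem_Ioi]
            constructor
            · rintro ⟨⟨_, hx2⟩, hx3⟩; exact ⟨hx3, hx2⟩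
            · rintro ⟨hx1, hx2⟩; exact ⟨⟨lt_of_le_of_lt hs.1.le hx1, hx2⟩, hx1⟩,
          integral_of_le hs.2]
    _ = ∫ τ in Ioc t t', ∫ s in Ioc t t', ψ (s, τ) := key
    _ = ∫ τ in Ioc t t', ∫ s in t..τ, φ τ s := by
        apply setIntegral_congr_fun measurableSet_Ioc
        intro τ hτ
        dsimp only
        have h1 : (fun s => ψ (s, τ)) = (Iio τ).indicator (fun s => φ τ s) := by
          funext s; by_cases hsτ : s < τ <;> simp [hψ, indicator, hsτ]
        rw [h1, setIntegral_indicator measurableSet_Iio,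
          show Ioc t t' ∩ Iio τ = Ioo t τ by
            ext x; simp only [mem_inter_iff, mem_Ioc, mem_Ioo, mem_Iio]
            constructor
            · rintro ⟨⟨hx1, _⟩, hx3⟩; exact ⟨hx1, hx3⟩
            · rintro ⟨hx1, hx2⟩; exact ⟨⟨hx1, le_trans hx2.le hτ.2⟩, hx2⟩,
          integral_of_le hτ.1.le, integral_Ioc_eq_integral_Ioo]

lemma conv_continuous {F G : ℝ → ℝ → ℂ}
    (hF : Continuous fun p : ℝ × ℝ => F p.1 p.2)
    (hG : Continuous fun p : ℝ × ℝ => G p.1 p.2) :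
    Continuous fun p : ℝ × ℝ => volterraConv F G p.1 p.2 := by
  have hc : Continuous (Function.uncurry fun (p : ℝ × ℝ) τ => F p.1 τ * G τ p.2) := by
    apply Continuous.mul
    · exact hF.comp ((continuous_fst.comp continuous_fst).prodMk continuous_snd)
    · exact hG.comp (continuous_snd.prodMk (continuous_snd.comp continuous_fst))
  have h1 : Continuous fun p : ℝ × ℝ => ∫ τ in (0:ℝ)..p.1, F p.1 τ * G τ p.2 :=
    continuous_parametric_intervalIntegral_of_continuous hc continuous_fst
  have h2 : Continuous fun p : ℝ × ℝ => ∫ τ in (0:ℝ)..p.2, F p.1 τ * G τ p.2 :=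
    continuous_parametric_intervalIntegral_of_continuous hc continuous_snd
  have : (fun p : ℝ × ℝ => volterraConv F G p.1 p.2) = fun p : ℝ × ℝ =>
      (∫ τ in (0:ℝ)..p.1, F p.1 τ * G τ p.2) - ∫ τ in (0:ℝ)..p.2, F p.1 τ * G τ p.2 := by
    funext p
    have hi : ∀ a b : ℝ, IntervalIntegrable (fun τ => F p.1 τ * G τ p.2) volume a b := by
      intro a b
      exact (hc.comp (continuous_const.prodMk continuous_id)).intervalIntegrable a b
    rw [volterraConv, eq_sub_iff_add_eq, add_comm,
      intervalIntegral.integral_add_adjacent_intervals (hi 0 p.2) (hi p.2 p.1)]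
  rw [this]
  exact h1.sub h2

lemma conv_assoc {F G H : ℝ → ℝ → ℂ}
    (hF : Continuous fun p : ℝ × ℝ => F p.1 p.2)
    (hG : Continuous fun p : ℝ × ℝ => G p.1 p.2)
    (hH : Continuous fun p : ℝ × ℝ => H p.1 p.2)
    {t t' : ℝ} (h : t ≤ t') :
    volterraConv (volterraConv F G) H t' t = volterraConv F (volterraConv G H) t' t := by
  have hφ : Continuous fun p : ℝ × ℝ => F t' p.1 * G p.1 p.2 * H p.2 t := by
    apply Continuous.mul
    · exact (hF.comp (continuous_const.prodMk continuous_fst)).mul hG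
    · exact hH.comp (continuous_snd.prodMk continuous_const)
  calc volterraConv (volterraConv F G) H t' t
      = ∫ s in t..t', ∫ τ in s..t', F t' τ * G τ s * H s t := by
        unfold volterraConv
        congr 1; funext s
        rw [← intervalIntegral.integral_mul_const]
    _ = ∫ τ in t..t', ∫ s in t..τ, F t' τ * G τ s * H s t :=
        triangle_swap (φ := fun τ s => F t' τ * G τ s * H s t) hφ h
    _ = volterraConv F (volterraConv G H) t' t := by
        unfold volterraConv
        congr 1; funext τ
        rw [← intervalIntegral.integral_const_mul]
        congr 1; funext s; ring

lemma iter_continuous {K : ℝ → ℝ → ℂ} (hK : Continuous fun p : ℝ × ℝ => K p.1 p.2) :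
    ∀ n, Continuous fun p : ℝ × ℝ => volterraIter K n p.1 p.2
  | 0 => hK
  | n + 1 => conv_continuous hK (iter_continuous hK n)

lemma iter_congr {K K' : ℝ → ℝ → ℂ} {T T' : ℝ}
    (h : ∀ a ∈ Icc T T', ∀ b ∈ Icc T T', b ≤ a → K a b = K' a b) :
    ∀ k, ∀ a ∈ Icc T T', ∀ b ∈ Icc T T', b ≤ a →
      volterraIter K k a b = volterraIter K' k a b := by
  intro k
  induction k with
  | zero => exact h
  | succ k ih =>
    intro a ha b hb hba
    show (∫ τ in b..a, K a τ * volterraIter K k τ b) = ∫ τ in b..a, K' a τ * volterraIter K' k τ b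
    apply intervalIntegral.integral_congr
    intro τ hτ
    rw [uIcc_of_le hba] at hτ
    have hτI : τ ∈ Icc T T' := ⟨le_trans hb.1 hτ.1, le_trans hτ.2 ha.2⟩
    dsimp only
    rw [h a ha τ hτI hτ.2, ih τ hτI b hb hτ.1]

lemma conv_congr {F F' G G' : ℝ → ℝ → ℂ} {T T' : ℝ}
    (hF : ∀ a ∈ Icc T T', ∀ b ∈ Icc T T', b ≤ a → F a b = F' a b)
    (hG : ∀ a ∈ Icc T T', ∀ b ∈ Icc T T', b ≤ a → G a b = G' a b) :
    ∀ a ∈ Icc T T', ∀ b ∈ Icc T T', b ≤ a →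
      volterraConv F G a b = volterraConv F' G' a b := by
  intro a ha b hb hba
  apply intervalIntegral.integral_congr
  intro τ hτ
  rw [uIcc_of_le hba] at hτ
  have hτI : τ ∈ Icc T T' := ⟨le_trans hb.1 hτ.1, le_trans hτ.2 ha.2⟩
  dsimp only
  rw [hF a ha τ hτI hτ.2, hG τ hτI b hb hτ.1]

theorem neumann_core (T T' : ℝ) (hTT : T ≤ T') (CK Cf : ℝ) (K g f : ℝ → ℝ → ℂ)
    (hKc : Continuous fun p : ℝ × ℝ => K p.1 p.2)
    (hgc : Continuous fun p : ℝ × ℝ => g p.1 p.2)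
    (hfc : Continuous fun p : ℝ × ℝ => f p.1 p.2)
    (hKb : ∀ t' ∈ Icc T T', ∀ t ∈ Icc T T', ‖K t' t‖ ≤ CK)
    (hfb : ∀ t' ∈ Icc T T', ∀ t ∈ Icc T T', ‖f t' t‖ ≤ Cf)
    (hf : ∀ t ∈ Icc T T', ∀ t' ∈ Icc T T', t ≤ t' →
      f t' t = g t' t + ∫ τ in t..t', K t' τ * f τ t) :
    ∀ n : ℕ, ∀ t ∈ Icc T T', ∀ t' ∈ Icc T T', t ≤ t' →
      ‖f t' t - (g t' t + ∑ k ∈ Finset.range n, volterraConv (volterraIter K k) g t' t)‖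
        ≤ Cf * (CK * (t' - t)) ^ (n + 1) / (Nat.factorial (n + 1) : ℝ) := by
  have hCK0 : 0 ≤ CK := le_trans (norm_nonneg _) (hKb T ⟨le_rfl, hTT⟩ T ⟨le_rfl, hTT⟩)
  have hCf0 : 0 ≤ Cf := le_trans (norm_nonneg _) (hfb T ⟨le_rfl, hTT⟩ T ⟨le_rfl, hTT⟩)
  have hconvc : ∀ k, Continuous fun p : ℝ × ℝ => volterraConv (volterraIter K k) g p.1 p.2 :=
    fun k => conv_continuous (iter_continuous hKc k) hgc
  have herrc : ∀ n : ℕ, Continuous fun p : ℝ × ℝ =>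
      f p.1 p.2 - (g p.1 p.2 +
        ∑ k ∈ Finset.range n, volterraConv (volterraIter K k) g p.1 p.2) := by
    intro n
    exact hfc.sub (hgc.add (continuous_finset_sum _ fun k _ => hconvc k))
  have hint : ∀ (t t' : ℝ) (F : ℝ → ℝ → ℂ), (Continuous fun p : ℝ × ℝ => F p.1 p.2) →
      IntervalIntegrable (fun τ => K t' τ * F τ t) volume t t' := by
    intro t t' F hFc
    exact ((hKc.comp (continuous_const.prodMk continuous_id)).mul
      (hFc.comp (continuous_id.prodMk continuous_const))).intervalIntegrable t t'
  -- key recursive identity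
  have hid : ∀ n : ℕ, ∀ t ∈ Icc T T', ∀ t' ∈ Icc T T', t ≤ t' →
      f t' t - (g t' t +
          ∑ k ∈ Finset.range (n + 1), volterraConv (volterraIter K k) g t' t)
        = ∫ τ in t..t', K t' τ * (f τ t - (g τ t +
            ∑ k ∈ Finset.range n, volterraConv (volterraIter K k) g τ t)) := by
    intro n t ht t' ht' htt
    set S : ℝ → ℝ → ℂ :=
      fun a b => ∑ k ∈ Finset.range n, volterraConv (volterraIter K k) g a b with hS
    have hSc : Continuous fun p : ℝ × ℝ => S p.1 p.2 :=
      continuous_finset_sum _ fun k _ => hconvc k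
    have e0 : (fun τ => K t' τ * (f τ t - (g τ t + S τ t)))
        = fun τ => K t' τ * f τ t - (K t' τ * g τ t + K t' τ * S τ t) := by
      funext τ; ring
    rw [e0, intervalIntegral.integral_sub (hint t t' f hfc)
        ((hint t t' g hgc).add (hint t t' S hSc)),
      intervalIntegral.integral_add (hint t t' g hgc) (hint t t' S hSc)]
    have e1 : (∫ τ in t..t', K t' τ * f τ t) = f t' t - g t' t := by
      rw [hf t ht t' ht' htt]; ring
    have e2 : (∫ τ in t..t', K t' τ * S τ t)
        = ∑ k ∈ Finset.range n, volterraConv (volterraIter K (k + 1)) g t' t := by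
      have : (fun τ => K t' τ * S τ t) = fun τ =>
          ∑ k ∈ Finset.range n, K t' τ * volterraConv (volterraIter K k) g τ t := by
        funext τ; rw [hS]; dsimp only; rw [Finset.mul_sum]
      rw [this, intervalIntegral.integral_finset_sum (fun k _ => hint t t' _ (hconvc k))]
      apply Finset.sum_congr rfl
      intro k _
      have : (∫ τ in t..t', K t' τ * volterraConv (volterraIter K k) g τ t)
          = volterraConv K (volterraConv (volterraIter K k) g) t' t := rfl
      rw [this, ← conv_assoc hKc (iter_continuous hKc k) hgc htt]
      rfl
    have e3 : (∫ τ in t..t', K t' τ * g τ t)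
        = volterraConv (volterraIter K 0) g t' t := rfl
    rw [e1, e2, e3, Finset.sum_range_succ']
    ring
  intro n
  induction n with
  | zero =>
    intro t ht t' ht' htt
    have hI : Icc t t' ⊆ Icc T T' := Icc_subset_Icc ht.1 ht'.2
    have hid0 : f t' t - (g t' t +
        ∑ k ∈ Finset.range 0, volterraConv (volterraIter K k) g t' t)
        = ∫ τ in t..t', K t' τ * f τ t := by
      rw [hf t ht t' ht' htt]; simp
    rw [hid0]
    calc ‖∫ τ in t..t', K t' τ * f τ t‖
        ≤ ∫ τ in t..t', ‖K t' τ * f τ t‖ :=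
          intervalIntegral.norm_integral_le_integral_norm htt
      _ ≤ ∫ τ in t..t', CK * Cf := by
          apply intervalIntegral.integral_mono_on htt _ intervalIntegrable_const
          · intro τ hτ
            have hτI : τ ∈ Icc T T' := hI hτ
            rw [norm_mul]
            exact mul_le_mul (hKb t' ht' τ hτI) (hfb τ hτI t ht) (norm_nonneg _) hCK0
          · exact (((hKc.comp (continuous_const.prodMk continuous_id)).mul
              (hfc.comp (continuous_id.prodMk continuous_const))).norm).intervalIntegrable t t'
      _ = Cf * (CK * (t' - t)) ^ (0 + 1) / (Nat.factorial (0 + 1) : ℝ) := by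
          simp [intervalIntegral.integral_const, smul_eq_mul]; ring
  | succ n IH =>
    intro t ht t' ht' htt
    have hI : Icc t t' ⊆ Icc T T' := Icc_subset_Icc ht.1 ht'.2
    rw [hid n t ht t' ht' htt]
    have hfac : ((Nat.factorial (n + 1 + 1)) : ℝ)
        = (n + 1 + 1) * (Nat.factorial (n + 1) : ℝ) := by
      rw [Nat.factorial_succ]; push_cast; ring
    have hfacpos : (0:ℝ) < (Nat.factorial (n + 1) : ℝ) := by
      exact_mod_cast Nat.factorial_pos (n + 1)
    calc ‖∫ τ in t..t', K t' τ * (f τ t - (g τ t +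
            ∑ k ∈ Finset.range n, volterraConv (volterraIter K k) g τ t))‖
        ≤ ∫ τ in t..t', ‖K t' τ * (f τ t - (g τ t +
            ∑ k ∈ Finset.range n, volterraConv (volterraIter K k) g τ t))‖ :=
          intervalIntegral.norm_integral_le_integral_norm htt
      _ ≤ ∫ τ in t..t',
            CK * (Cf * (CK * (τ - t)) ^ (n + 1) / (Nat.factorial (n + 1) : ℝ)) := by
          apply intervalIntegral.integral_mono_on htt
          · exact (((hKc.comp (continuous_const.prodMk continuous_id)).mul
              ((herrc n).comp (continuous_id.prodMk continuous_const))).norm).intervalIntegrable t t'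
          · apply Continuous.intervalIntegrable; fun_prop
          · intro τ hτ
            have hτI : τ ∈ Icc T T' := hI hτ
            rw [norm_mul]
            exact mul_le_mul (hKb t' ht' τ hτI) (IH t ht τ hτI hτ.1)
              (norm_nonneg _) hCK0
      _ = Cf * (CK * (t' - t)) ^ (n + 1 + 1) / (Nat.factorial (n + 1 + 1) : ℝ) := by
          have hb : (fun τ : ℝ => CK * (Cf * (CK * (τ - t)) ^ (n + 1)
                / (Nat.factorial (n + 1) : ℝ)))
              = fun τ : ℝ => (CK * Cf * CK ^ (n + 1) / (Nat.factorial (n + 1) : ℝ))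
                * (τ - t) ^ (n + 1) := by
            funext τ; rw [mul_pow]; ring
          have hpow : (∫ τ in t..t', (τ - t) ^ (n + 1))
              = (t' - t) ^ (n + 1 + 1) / ((n : ℝ) + 1 + 1) := by
            have := intervalIntegral.integral_comp_sub_right (fun x => x ^ (n + 1)) t
              (a := t) (b := t')
            rw [this, sub_self, integral_pow, zero_pow (by omega : n + 1 + 1 ≠ 0)]
            push_cast
            ring
          rw [hb, intervalIntegral.integral_const_mul, hpow, hfac, mul_pow]
          have hF : ((Nat.factorial (n + 1)) : ℝ) ≠ 0 := ne_of_gt hfacpos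
          field_simp
          ring


/-- Error bound for the truncated Neumann series: if `|K| ≤ C_K` and
`|f| ≤ C_f` on `I² = [T,T']²` and `f = g + K ⋆ f` on `t ≤ t'` in `I`, then
`|f − f_N^{(n−1)}| ≤ C_f·(C_K·(T'−T))ⁿ/n!` for every `n ≥ 1`, where
`f_N^{(n−1)} = g + Σ_{k=1}^{n−1} K^{⋆k} ⋆ g`. Here
`volterraIter K k = K^{⋆(k+1)}`. -/
theorem stmt_12 (T T' : ℝ) (hTT : T ≤ T') (CK Cf : ℝ)
    (K : ℝ → ℝ → ℂ)
    (hKcont : ContinuousOn (fun p : ℝ × ℝ => K p.1 p.2)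
      (Set.Icc T T' ×ˢ Set.Icc T T'))
    (hKbdd : ∀ t' ∈ Set.Icc T T', ∀ t ∈ Set.Icc T T', ‖K t' t‖ ≤ CK)
    (g f : ℝ → ℝ → ℂ)
    (hgcont : ContinuousOn (fun p : ℝ × ℝ => g p.1 p.2)
      (Set.Icc T T' ×ˢ Set.Icc T T'))
    (hfcont : ContinuousOn (fun p : ℝ × ℝ => f p.1 p.2)
      (Set.Icc T T' ×ˢ Set.Icc T T'))
    (hfbdd : ∀ t' ∈ Set.Icc T T', ∀ t ∈ Set.Icc T T', ‖f t' t‖ ≤ Cf)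
    (hf : ∀ t ∈ Set.Icc T T', ∀ t' ∈ Set.Icc T T', t ≤ t' →
      f t' t = g t' t + ∫ τ in t..t', K t' τ * f τ t) :
    ∀ n : ℕ, 1 ≤ n → ∀ t ∈ Set.Icc T T', ∀ t' ∈ Set.Icc T T', t ≤ t' →
      ‖f t' t -
        (g t' t + ∑ k ∈ Finset.range (n - 1), volterraConv (volterraIter K k) g t' t)‖
        ≤ Cf * (CK * (T' - T)) ^ n / (Nat.factorial n : ℝ) := by
  classical
  set I2 : Set (ℝ × ℝ) := Set.Icc T T' ×ˢ Set.Icc T T' with hI2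
  have hcl : IsClosed I2 := isClosed_Icc.prod isClosed_Icc
  obtain ⟨K₁, hK₁⟩ := (ContinuousMap.mk _ hKcont.restrict).exists_restrict_eq (Y := ℂ) hcl
  obtain ⟨g₁, hg₁⟩ := (ContinuousMap.mk _ hgcont.restrict).exists_restrict_eq (Y := ℂ) hcl
  obtain ⟨f₁, hf₁⟩ := (ContinuousMap.mk _ hfcont.restrict).exists_restrict_eq (Y := ℂ) hcl
  set K' : ℝ → ℝ → ℂ := fun a b => K₁ (a, b) with hK'
  set g' : ℝ → ℝ → ℂ := fun a b => g₁ (a, b) with hg'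
  set f' : ℝ → ℝ → ℂ := fun a b => f₁ (a, b) with hf'
  have hK'eq : ∀ a ∈ Icc T T', ∀ b ∈ Icc T T', K' a b = K a b := by
    intro a ha b hb
    have := congrFun (congrArg DFunLike.coe hK₁) ⟨(a, b), Set.mk_mem_prod ha hb⟩
    simpa using this
  have hg'eq : ∀ a ∈ Icc T T', ∀ b ∈ Icc T T', g' a b = g a b := by
    intro a ha b hb
    have := congrFun (congrArg DFunLike.coe hg₁) ⟨(a, b), Set.mk_mem_prod ha hb⟩
    simpa using this
  have hf'eq : ∀ a ∈ Icc T T', ∀ b ∈ Icc T T', f' a b = f a b := by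
    intro a ha b hb
    have := congrFun (congrArg DFunLike.coe hf₁) ⟨(a, b), Set.mk_mem_prod ha hb⟩
    simpa using this
  have hK'c : Continuous fun p : ℝ × ℝ => K' p.1 p.2 := by
    have : (fun p : ℝ × ℝ => K' p.1 p.2) = fun p => K₁ p := rfl
    rw [this]; exact K₁.continuous
  have hg'c : Continuous fun p : ℝ × ℝ => g' p.1 p.2 := by
    have : (fun p : ℝ × ℝ => g' p.1 p.2) = fun p => g₁ p := rfl
    rw [this]; exact g₁.continuous
  have hf'c : Continuous fun p : ℝ × ℝ => f' p.1 p.2 := by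
    have : (fun p : ℝ × ℝ => f' p.1 p.2) = fun p => f₁ p := rfl
    rw [this]; exact f₁.continuous
  have hK'b : ∀ t' ∈ Icc T T', ∀ t ∈ Icc T T', ‖K' t' t‖ ≤ CK := by
    intro a ha b hb; rw [hK'eq a ha b hb]; exact hKbdd a ha b hb
  have hf'b : ∀ t' ∈ Icc T T', ∀ t ∈ Icc T T', ‖f' t' t‖ ≤ Cf := by
    intro a ha b hb; rw [hf'eq a ha b hb]; exact hfbdd a ha b hb
  have hf'eqn : ∀ t ∈ Icc T T', ∀ t' ∈ Icc T T', t ≤ t' →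
      f' t' t = g' t' t + ∫ τ in t..t', K' t' τ * f' τ t := by
    intro t ht t' ht' htt
    rw [hf'eq t' ht' t ht, hg'eq t' ht' t ht]
    have : (∫ τ in t..t', K' t' τ * f' τ t) = ∫ τ in t..t', K t' τ * f τ t := by
      apply intervalIntegral.integral_congr
      intro τ hτ
      rw [uIcc_of_le htt] at hτ
      have hτI : τ ∈ Icc T T' := ⟨le_trans ht.1 hτ.1, le_trans hτ.2 ht'.2⟩
      dsimp only
      rw [hK'eq t' ht' τ hτI, hf'eq τ hτI t ht]
    rw [this]
    exact hf t ht t' ht' htt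
  have hcore := neumann_core T T' hTT CK Cf K' g' f' hK'c hg'c hf'c hK'b hf'b hf'eqn
  intro n hn t ht t' ht' htt
  have h1 := hcore (n - 1) t ht t' ht' htt
  have htri : ∀ a ∈ Icc T T', ∀ b ∈ Icc T T', b ≤ a → K' a b = K a b :=
    fun a ha b hb _ => hK'eq a ha b hb
  have hgtri : ∀ a ∈ Icc T T', ∀ b ∈ Icc T T', b ≤ a → g' a b = g a b :=
    fun a ha b hb _ => hg'eq a ha b hb
  have hsum : ∀ k : ℕ, volterraConv (volterraIter K' k) g' t' t
      = volterraConv (volterraIter K k) g t' t := by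
    intro k
    exact conv_congr (iter_congr htri k) hgtri t' ht' t ht htt
  rw [hf'eq t' ht' t ht, hg'eq t' ht' t ht] at h1
  simp only [hsum] at h1
  have hn1 : n - 1 + 1 = n := Nat.succ_pred_eq_of_pos hn
  rw [hn1] at h1
  refine le_trans h1 ?_
  have hCK0 : 0 ≤ CK := le_trans (norm_nonneg _) (hKbdd T ⟨le_rfl, hTT⟩ T ⟨le_rfl, hTT⟩)
  have hCf0 : 0 ≤ Cf := le_trans (norm_nonneg _) (hfbdd T ⟨le_rfl, hTT⟩ T ⟨le_rfl, hTT⟩)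
  have hbase : CK * (t' - t) ≤ CK * (T' - T) := by
    apply mul_le_mul_of_nonneg_left _ hCK0
    have := ht.1; have := ht'.2; linarith
  have hbase0 : 0 ≤ CK * (t' - t) := mul_nonneg hCK0 (by linarith)
  have hfacpos : (0:ℝ) < (Nat.factorial n : ℝ) := by exact_mod_cast Nat.factorial_pos n
  apply div_le_div_of_nonneg_right ?_ hfacpos.le
  exact mul_le_mul_of_nonneg_left (pow_le_pow_left₀ hbase0 hbase n) hCf0
end
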